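/- arXiv:2506.21879 — 4 statements merged into one kernel-verified Lean document; each statement's English description precedes it below -/
import Mathlib

section
/- Let H be a Hopf algebra over a field k such that the trivial H-module k (via the counit) is projective as an H-module, and assume H is finite-dimensional. Then H is semisimple. -/
/-!
Projectivity of the trivial module splits the counit `H → k`, and the image of `1` under the
splitting is a left integral `Λ` with `ε Λ = 1`. The averaging
`π ↦ ∑ Λ₁ • π (S Λ₂ • ·)` then turns every `k`-linear retraction of an `H`-linear injection into an
`H`-linear one, exactly as in Maschke's theorem. The `H`-linearity rests on the identity
`(h ⊗ 1) t = t (1 ⊗ h)` for `t = ∑ Λ₁ ⊗ S Λ₂`, proved in the convolution algebra `Hom(H, H ⊗ H)`.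
-/

open Coalgebra TensorProduct WithConv LinearMap

namespace HopfAlgebra

section Integral

variable {R H : Type*} [CommSemiring R] [Semiring H] [HopfAlgebra R H]

local notation "ι₁" => toConv (LinearMap.flip (TensorProduct.mk R H H) (1 : H))
local notation "ι₂" => toConv (TensorProduct.mk R H H (1 : H))
local notation "ι₂S" => toConv (TensorProduct.mk R H H (1 : H) ∘ₗ antipode R)

theorem sum_counit_right_smul {a : H} {ι : Type*} (𝓡 : Repr R a ι) :
    ∑ i ∈ 𝓡.index, counit (R := R) (𝓡.right i) • 𝓡.left i = a := by
  simpa only [map_sum, TensorProduct.rid_tmul, one_smul] using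
    congr(TensorProduct.rid R H $(sum_tmul_counit_eq 𝓡))

variable (R) in
def IsLeftIntegral (Λ : H) : Prop := ∀ x : H, x * Λ = counit (R := R) x • Λ

variable (R) in
theorem exists_isLeftIntegral_counit_eq_one_of_projective
    (hproj : letI : Module H R := Module.compHom R (Bialgebra.counitAlgHom R H).toRingHom
      Module.Projective H R) :
    ∃ Λ : H, IsLeftIntegral R Λ ∧ counit (R := R) Λ = 1 := by
  let : Module H R := Module.compHom R (Bialgebra.counitAlgHom R H).toRingHom
  have smul_one_eq (x : H) : x • (1 : R) = counit x := mul_one _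
  have counit_surj : Function.Surjective (toSpanSingleton H R 1) := fun r =>
    ⟨algebraMap R H r, by simp [smul_one_eq]⟩
  obtain ⟨s, hs⟩ := Module.projective_lifting_property _ LinearMap.id counit_surj
  refine ⟨s 1, fun x => ?_, by simpa [smul_one_eq] using LinearMap.congr_fun hs 1⟩
  calc x * s 1 = s (x • 1) := (s.map_smul x 1).symm
    _ = s (algebraMap R H (counit x) • 1) := by simp [smul_one_eq]
    _ = counit x • s 1 := by rw [s.map_smul, Algebra.smul_def]; rfl

theorem lTensor_antipode_comul_mul (a x : H) :
    (antipode R).lTensor H (comul (a * x)) =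
      (ι₁ * ((antipode R).lTensor H (comul x) • ι₂S)) a := by
  rw [(ℛ R a).convMul_apply, Bialgebra.comul_mul, ← (ℛ R a).eq, ← (ℛ R x).eq]
  simp only [map_sum, lTensor_tmul, Finset.mul_sum, Finset.sum_mul, antipode_mul_antidistrib,
    Algebra.TensorProduct.tmul_mul_tmul, flip_apply, mk_apply, ofConv_smul, LinearMap.smul_apply,
    coe_comp, Function.comp_apply, smul_eq_mul, mul_one, one_mul]
  exact Finset.sum_comm

theorem one_tmul_antipode_convMul_one_tmul : ι₂S * ι₂ = 1 := by
  ext h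
  rw [(ℛ R h).convMul_apply]
  simp [Algebra.TensorProduct.tmul_mul_tmul, ← tmul_sum, sum_antipode_mul_eq_algebraMap_counit,
    Algebra.algebraMap_eq_smul_one, Algebra.TensorProduct.one_def]

theorem IsLeftIntegral.tmul_one_mul_eq_mul_one_tmul {Λ : H} (hΛ : IsLeftIntegral R Λ) (h : H) :
    (h ⊗ₜ[R] 1) * (antipode R).lTensor H (comul Λ) =
      (antipode R).lTensor H (comul Λ) * (1 ⊗ₜ[R] h) := by
  set t := (antipode R).lTensor H (comul Λ)
  -- `x ↦ ∑ x₁Λ₁ ⊗ S Λ₂ S x₂` is `x ↦ (id ⊗ S) (Δ (x Λ))`, which integrality turns into `x ↦ ε x • t`.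
  have twist : t • 1 = ι₁ * (t • ι₂S) := by
    ext a
    rw [← lTensor_antipode_comul_mul, hΛ]
    simp [t, Algebra.algebraMap_eq_smul_one]
  calc (h ⊗ₜ[R] 1) * t
      = (ι₁ * (t • 1)) h := by
        rw [(ℛ R h).convMul_apply]
        simp only [flip_apply, mk_apply, ofConv_smul, LinearMap.smul_apply, convOne_apply,
          Algebra.algebraMap_eq_smul_one, smul_eq_mul, Algebra.mul_smul_comm, mul_one]
        simp_rw [← smul_mul_assoc, ← Finset.sum_mul, smul_tmul', ← sum_tmul, sum_counit_right_smul]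
    _ = ((t • 1) * ι₂) h := by
        conv_rhs => rw [twist, mul_assoc, smul_mul_assoc, one_tmul_antipode_convMul_one_tmul]
    _ = t * (1 ⊗ₜ[R] h) := by
        rw [smul_mul_assoc, one_mul]; rfl

end Integral

section Averaging

variable {R H V W : Type*} [CommSemiring R] [Semiring H] [HopfAlgebra R H]
  [AddCommMonoid V] [Module R V] [Module H V] [IsScalarTower R H V]
  [AddCommMonoid W] [Module R W] [Module H W] [IsScalarTower R H W]

variable (R H) in
def conjugateBilin (π : W →ₗ[R] V) : H →ₗ[R] H →ₗ[R] W →ₗ[R] V :=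
  mk₂ R (fun a b => Algebra.lsmul R R V a ∘ₗ π ∘ₗ Algebra.lsmul R R W b)
    (fun _ _ _ => by ext; simp) (fun _ _ _ => by ext; simp)
    (fun _ _ _ => by ext; simp) (fun c a b => by ext; simpa using smul_comm a c _)

theorem lift_conjugateBilin_mul_one_tmul (π : W →ₗ[R] V) (x : H ⊗[R] H) (h : H) (w : W) :
    lift (conjugateBilin R H π) (x * (1 ⊗ₜ h)) w = lift (conjugateBilin R H π) x (h • w) := by
  induction x with
  | zero => simp
  | tmul a b => simp [conjugateBilin]
  | add x y hx hy => simp_all [add_mul]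

theorem lift_conjugateBilin_tmul_one_mul (π : W →ₗ[R] V) (x : H ⊗[R] H) (h : H) (w : W) :
    lift (conjugateBilin R H π) ((h ⊗ₜ 1) * x) w = h • lift (conjugateBilin R H π) x w := by
  induction x with
  | zero => simp
  | tmul a b => simp [conjugateBilin]
  | add x y hx hy => simp_all [mul_add]

def integralAverage (Λ : H) (π : W →ₗ[R] V) : W →ₗ[R] V :=
  lift (conjugateBilin R H π) ((antipode R).lTensor H (comul Λ))

theorem IsLeftIntegral.integralAverage_map_smul {Λ : H} (hΛ : IsLeftIntegral R Λ)
    (π : W →ₗ[R] V) (h : H) (w : W) :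
    integralAverage Λ π (h • w) = h • integralAverage Λ π w := by
  rw [integralAverage, ← lift_conjugateBilin_mul_one_tmul, ← hΛ.tmul_one_mul_eq_mul_one_tmul,
    lift_conjugateBilin_tmul_one_mul]

def IsLeftIntegral.equivariantAverage {Λ : H} (hΛ : IsLeftIntegral R Λ) (π : W →ₗ[R] V) :
    W →ₗ[H] V where
  __ := integralAverage Λ π
  map_smul' := hΛ.integralAverage_map_smul π

theorem integralAverage_apply_of_comp {Λ : H} (hε : counit (R := R) Λ = 1) {π : W →ₗ[R] V}
    (i : V →ₗ[H] W) (hπ : ∀ v, π (i v) = v) (v : V) : integralAverage Λ π (i v) = v := by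
  rw [integralAverage, ← (ℛ R Λ).eq]
  simp only [map_sum, lTensor_tmul, lift.tmul, conjugateBilin, mk₂_apply, LinearMap.sum_apply,
    comp_apply, Algebra.lsmul_coe, ← i.map_smul, hπ]
  simp_rw [← mul_smul, ← Finset.sum_smul, sum_mul_antipode_eq_smul, hε, one_smul]

end Averaging

section Field

variable {k H V W : Type*} [Field k] [Ring H] [HopfAlgebra k H]
  [AddCommGroup V] [Module k V] [Module H V] [IsScalarTower k H V]
  [AddCommGroup W] [Module k W] [Module H W] [IsScalarTower k H W] {Λ : H}

theorem IsLeftIntegral.exists_leftInverse_of_injective (hΛ : IsLeftIntegral k Λ)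
    (hε : counit (R := k) Λ = 1) (f : V →ₗ[H] W) (hf : ker f = ⊥) :
    ∃ g : W →ₗ[H] V, g ∘ₗ f = .id :=
  ⟨hΛ.equivariantAverage (f.restrictScalars k).leftInverse, LinearMap.ext <|
    integralAverage_apply_of_comp hε f (leftInverse_apply_of_inj (by simpa using hf))⟩

theorem IsLeftIntegral.isSemisimpleModule (hΛ : IsLeftIntegral k Λ)
    (hε : counit (R := k) Λ = 1) : IsSemisimpleModule H V where
  exists_isCompl p := by
    obtain ⟨f, hf⟩ := hΛ.exists_leftInverse_of_injective hε p.subtype p.ker_subtype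
    exact ⟨ker f, isCompl_of_proj <| DFunLike.congr_fun hf⟩

end Field

end HopfAlgebra

open HopfAlgebra in
theorem stmt_9_general (k H : Type) [Field k] [Ring H] [HopfAlgebra k H]
    (hproj :
      letI : Module H k := Module.compHom k (Bialgebra.counitAlgHom k H).toRingHom
      Module.Projective H k) :
    IsSemisimpleRing H := by
  obtain ⟨Λ, hΛ, hε⟩ := exists_isLeftIntegral_counit_eq_one_of_projective k hproj
  exact hΛ.isSemisimpleModule hε

/-- If H is a finite-dimensional Hopf algebra over a field k such that
the trivial H-module k (with action through the counit) is projective, then H is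
semisimple. -/
theorem stmt_9 (k H : Type) [Field k] [Ring H] [HopfAlgebra k H] [FiniteDimensional k H]
    (hproj :
      letI : Module H k := Module.compHom k (Bialgebra.counitAlgHom k H).toRingHom
      Module.Projective H k) :
    IsSemisimpleRing H :=
  stmt_9_general k H hproj
end

section
/- Let (R, {b_i}) be a transitive unital Z_+-ring of finite rank with a regular element R ∈ R ⊗ C satisfying a·R = FPdim(a)·R for all a ∈ R, and suppose R² = d·R in R ⊗ C where d = FPdim(R). Let T be the matrix of multiplication by R on a Z_+-module M with finite Z_+-basis {w_1,...,w_ℓ} on which T has all entries positive integers. Then the trace of T equals d, and consequently ℓ ≤ d. -/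
/-!
Since `r * r = d • r`, the matrix `T` of multiplication by `r` satisfies `T * T = d • T`, so every
column of `T` is an eigenvector of `T` for the eigenvalue `d`. For a positive matrix the eigenvectors
of an eigenvalue that has a positive eigenvector are all proportional to it (compare with the column
at the index minimising the ratio: the difference is a nonnegative eigenvector with a zero entry,
hence zero). Thus `T` has proportional columns, `T i i * T k k = T k i * T i k`, and summing over `i`
gives `trace T * T k k = (T * T) k k = d * T k k`. Finally each diagonal entry is at least `1`.
-/

open Matrix Finset

section MatrixOfSMul

variable {S R M ι : Type*} [CommRing S] [Ring R] [AddCommGroup M] [Module S M] [Module R M]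
  [SMulCommClass R S M] [Fintype ι] [DecidableEq ι]

theorem LinearMap.toMatrix_distribSMul_mul_self (w : Module.Basis ι S M) {r : R} {d : ℕ}
    (hr : r * r = d • r) :
    toMatrix w w (DistribSMul.toLinearMap S M r) * toMatrix w w (DistribSMul.toLinearMap S M r) =
      (d : S) • toMatrix w w (DistribSMul.toLinearMap S M r) := by
  have hsq : DistribSMul.toLinearMap S M r * DistribSMul.toLinearMap S M r =
      (d : S) • DistribSMul.toLinearMap S M r := by
    ext x
    simp only [Module.End.mul_apply, LinearMap.smul_apply, DistribSMul.toLinearMap_apply]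
    rw [← mul_smul, hr, smul_assoc, Nat.cast_smul_eq_nsmul]
  rw [← toMatrix_mul, hsq, map_smul]

end MatrixOfSMul

namespace Matrix

section PositiveMatrix

variable {K ι : Type*} [Field K] [LinearOrder K] [IsStrictOrderedRing K] [Fintype ι]
  {T : Matrix ι ι K} {c : K}

theorem eq_zero_of_nonneg_of_mulVec_apply_eq_zero (hpos : ∀ i j, 0 < T i j) {v : ι → K}
    (hv : ∀ i, 0 ≤ v i) {k : ι} (hk : (T *ᵥ v) k = 0) : v = 0 := by
  have hterms : ∀ n ∈ univ, 0 ≤ T k n * v n := fun n _ => mul_nonneg (hpos k n).le (hv n)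
  funext i
  have := (sum_eq_zero_iff_of_nonneg hterms).1 hk i (mem_univ i)
  exact (mul_eq_zero.1 this).resolve_left (hpos k i).ne'

theorem mul_eq_mul_of_mulVec_eq_smul (hpos : ∀ i j, 0 < T i j) {u u' : ι → K}
    (hu : T *ᵥ u = c • u) (hu' : T *ᵥ u' = c • u') (hu'pos : ∀ i, 0 < u' i) (i m : ι) :
    u i * u' m = u m * u' i := by
  obtain ⟨k, -, hk⟩ := exists_min_image univ (fun i => u i / u' i) ⟨i, mem_univ i⟩
  set v : ι → K := u' k • u - u k • u' with hv_def
  have hv : ∀ i, 0 ≤ v i := by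
    intro i
    have := hk i (mem_univ i)
    rw [div_le_div_iff₀ (hu'pos k) (hu'pos i)] at this
    simp only [hv_def, Pi.sub_apply, Pi.smul_apply, smul_eq_mul, sub_nonneg]
    linarith
  have hTv : T *ᵥ v = c • v := by
    rw [hv_def, mulVec_sub, mulVec_smul, mulVec_smul, hu, hu', smul_sub, smul_comm c, smul_comm c]
  have hvk : (T *ᵥ v) k = 0 := by
    rw [hTv]
    simp [hv_def, mul_comm]
  have hv0 := eq_zero_of_nonneg_of_mulVec_apply_eq_zero hpos hv hvk
  have hvi : u' k * u i = u k * u' i := by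
    simpa [hv_def, sub_eq_zero] using congrFun hv0 i
  have hvm : u' k * u m = u k * u' m := by
    simpa [hv_def, sub_eq_zero] using congrFun hv0 m
  apply mul_left_cancel₀ (hu'pos k).ne'
  linear_combination u' m * hvi - u' i * hvm

theorem trace_eq_of_mul_self_eq_smul [Nonempty ι] (hpos : ∀ i j, 0 < T i j)
    (hT : T * T = c • T) : T.trace = c := by
  have hcol : ∀ j, T *ᵥ (fun i => T i j) = c • fun i => T i j := fun j => by
    funext i
    simpa [mulVec, dotProduct, mul_apply] using congrFun (congrFun hT i) j
  obtain ⟨k⟩ := ‹Nonempty ι›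
  apply mul_right_cancel₀ (hpos k k).ne'
  calc T.trace * T k k = ∑ i, T k i * T i k := by
        rw [trace, sum_mul]
        refine sum_congr rfl fun i _ => ?_
        simpa using mul_eq_mul_of_mulVec_eq_smul hpos (hcol i) (hcol k) (hpos · k) i k
    _ = c * T k k := by simpa [mul_apply] using congrFun (congrFun hT k) k

end PositiveMatrix

variable {ι : Type*} [Fintype ι] {T : Matrix ι ι ℤ}

theorem trace_eq_of_mul_self_eq_smul_int [Nonempty ι] (hpos : ∀ i j, 0 < T i j) {c : ℤ}
    (hT : T * T = c • T) : T.trace = c := by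
  have hposℚ : ∀ i j, 0 < T.map (Int.castRingHom ℚ) i j := fun i j => by simpa using hpos i j
  have hTℚ : T.map (Int.castRingHom ℚ) * T.map (Int.castRingHom ℚ) =
      (c : ℚ) • T.map (Int.castRingHom ℚ) := by
    rw [← Matrix.map_mul, hT]
    ext i j
    simp
  have := trace_eq_of_mul_self_eq_smul hposℚ hTℚ
  rw [← AddMonoidHom.map_trace, eq_intCast] at this
  exact_mod_cast this

theorem card_le_trace_of_pos (hpos : ∀ i j, 0 < T i j) : (Fintype.card ι : ℤ) ≤ T.trace := by
  rw [trace]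
  simpa using sum_le_sum fun i (_ : i ∈ univ) => Int.add_one_le_iff.2 (hpos i i)

end Matrix

theorem stmt_12_general (R : Type) [Ring R] (d : ℕ) (r : R)
    (hr : r * r = d • r)
    (M : Type) [AddCommGroup M] [Module R M]
    (ℓ : ℕ) (hℓ : 0 < ℓ) (w : Module.Basis (Fin ℓ) ℤ M)
    (T : Matrix (Fin ℓ) (Fin ℓ) ℤ)
    (hT : ∀ i j, T i j = w.repr (r • w j) i)
    (hpos : ∀ i j, 0 < T i j) :
    T.trace = (d : ℤ) ∧ ℓ ≤ d := by
  have hT_eq : T = LinearMap.toMatrix w w (DistribSMul.toLinearMap ℤ M r) := by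
    ext i j
    rw [hT, LinearMap.toMatrix_apply, DistribSMul.toLinearMap_apply]
  have hTT : T * T = (d : ℤ) • T := hT_eq ▸ LinearMap.toMatrix_distribSMul_mul_self w hr
  have : Nonempty (Fin ℓ) := ⟨⟨0, hℓ⟩⟩
  have htrace : T.trace = d := trace_eq_of_mul_self_eq_smul_int hpos hTT
  refine ⟨htrace, ?_⟩
  simpa [htrace] using card_le_trace_of_pos hpos

/-- Let R be a (transitive unital Z₊-)ring with an element r (the
regular element) satisfying r·r = d·r where d = FPdim(r) is a positive integer.
Let M be an R-module with a finite ℤ-basis w₁,...,w_ℓ (a Z₊-module) and let T be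
the matrix of multiplication by r in this basis.  If all entries of T are positive
integers, then trace(T) = d and consequently ℓ ≤ d. -/
theorem stmt_12 (R : Type) [Ring R] (d : ℕ) (hd : 0 < d) (r : R)
    (hr : r * r = d • r)
    (M : Type) [AddCommGroup M] [Module R M]
    (ℓ : ℕ) (hℓ : 0 < ℓ) (w : Module.Basis (Fin ℓ) ℤ M)
    (T : Matrix (Fin ℓ) (Fin ℓ) ℤ)
    (hT : ∀ i j, T i j = w.repr (r • w j) i)
    (hpos : ∀ i j, 0 < T i j) :
    T.trace = (d : ℤ) ∧ ℓ ≤ d :=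
  stmt_12_general R d r hr M ℓ hℓ w T hT hpos
end

section
/- Let T be an ℓ × ℓ matrix with positive integer entries satisfying T² = dT for some positive integer d. Then the trace of T equals d and ℓ ≤ d. -/
/-- An ℓ × ℓ matrix T with positive integer entries satisfying
T² = dT for a positive integer d has trace(T) = d, and consequently ℓ ≤ d. -/
theorem stmt_13 (ℓ : ℕ) (hℓ : 0 < ℓ) (d : ℕ) (hd : 0 < d)
    (T : Matrix (Fin ℓ) (Fin ℓ) ℤ)
    (hpos : ∀ i j, 0 < T i j)
    (hT : T * T = (d : ℤ) • T) :
    T.trace = (d : ℤ) ∧ ℓ ≤ d := by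
  have hent : ∀ i j, ∑ k, T i k * T k j = (d : ℤ) * T i j := by
    intro i j
    have := congrFun (congrFun hT i) j
    simpa [Matrix.mul_apply, Matrix.smul_apply, smul_eq_mul] using this
  -- key rank-one cross-product identity
  have key : ∀ (j j' i i' : Fin ℓ), T i j * T i' j' = T i' j * T i j' := by
    intro j j'
    -- choose i₀ minimizing (T i j : ℚ) / (T i j')
    obtain ⟨i₀, -, hmin⟩ := Finset.exists_min_image Finset.univ
      (fun i => (T i j : ℚ) / (T i j' : ℚ)) ⟨⟨0, hℓ⟩, Finset.mem_univ _⟩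
    have hratio : ∀ i, T i₀ j * T i j' ≤ T i j * T i₀ j' := by
      intro i
      have h := hmin i (Finset.mem_univ i)
      have h1 : (0 : ℚ) < (T i₀ j' : ℤ) := by exact_mod_cast hpos i₀ j'
      have h2 : (0 : ℚ) < (T i j' : ℤ) := by exact_mod_cast hpos i j'
      rw [div_le_div_iff₀ h1 h2] at h
      exact_mod_cast h
    set v : Fin ℓ → ℤ := fun i => T i j * T i₀ j' - T i₀ j * T i j' with hv
    have hv0 : ∀ i, 0 ≤ v i := fun i => sub_nonneg.mpr (hratio i)
    have hTv : ∑ k, T i₀ k * v k = 0 := by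
      have e1 : ∑ k, T i₀ k * (T k j * T i₀ j') = (d : ℤ) * T i₀ j * T i₀ j' := by
        simp_rw [← mul_assoc]
        rw [← Finset.sum_mul, hent i₀ j]
      have e2 : ∑ k, T i₀ k * (T i₀ j * T k j') = (d : ℤ) * T i₀ j' * T i₀ j := by
        have : ∀ k, T i₀ k * (T i₀ j * T k j') = (T i₀ k * T k j') * T i₀ j := by
          intro k; ring
        simp_rw [this]
        rw [← Finset.sum_mul, hent i₀ j']
      simp_rw [hv, mul_sub]
      rw [Finset.sum_sub_distrib, e1, e2]
      ring
    have hvzero : ∀ k, v k = 0 := by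
      have := (Finset.sum_eq_zero_iff_of_nonneg
        (fun k _ => mul_nonneg (le_of_lt (hpos i₀ k)) (hv0 k))).mp hTv
      intro k
      have h := this k (Finset.mem_univ k)
      rcases mul_eq_zero.mp h with h' | h'
      · exact absurd h' (ne_of_gt (hpos i₀ k))
      · exact h'
    -- proportionality through i₀
    have hprop : ∀ i, T i j * T i₀ j' = T i₀ j * T i j' := by
      intro i
      have := hvzero i
      simp only [hv] at this
      linarith
    intro i i'
    have hne : T i₀ j' ≠ 0 := ne_of_gt (hpos i₀ j')
    have : (T i j * T i' j') * T i₀ j' = (T i' j * T i j') * T i₀ j' := by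
      calc (T i j * T i' j') * T i₀ j' = (T i j * T i₀ j') * T i' j' := by ring
        _ = (T i₀ j * T i j') * T i' j' := by rw [hprop i]
        _ = (T i₀ j * T i' j') * T i j' := by ring
        _ = (T i' j * T i₀ j') * T i j' := by rw [hprop i']
        _ = (T i' j * T i j') * T i₀ j' := by ring
    exact mul_right_cancel₀ hne this
  -- trace = d
  set i0 : Fin ℓ := ⟨0, hℓ⟩
  have htr : T.trace = (d : ℤ) := by
    have h1 : T.trace * T i0 i0 = ∑ i, T i0 i * T i i0 := by
      rw [Matrix.trace, Finset.sum_mul]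
      apply Finset.sum_congr rfl
      intro i _
      simpa [Matrix.diag] using key i i0 i i0
    have h2 : (∑ i, T i0 i * T i i0) = (d : ℤ) * T i0 i0 := hent i0 i0
    have := h1.trans h2
    exact mul_right_cancel₀ (ne_of_gt (hpos i0 i0)) this
  refine ⟨htr, ?_⟩
  have hsum : (ℓ : ℤ) ≤ T.trace := by
    rw [Matrix.trace]
    calc (ℓ : ℤ) = ∑ _i : Fin ℓ, (1 : ℤ) := by simp
      _ ≤ ∑ i, T.diag i := Finset.sum_le_sum (fun i _ => hpos i i)
  rw [htr] at hsum
  exact_mod_cast hsum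
end

section
/- Let H be a Hopf algebra over an algebraically closed field k with central Hopf subalgebra C, H finitely generated over C, and let I = {m ∈ maxSpec C : H/mH has a 1-dimensional module}. Then for characters φ, ψ of C with m_ψ = m_φ ∗ m_χ for some m_χ ∈ I, there exists a character χ̂ of H extending χ such that the right winding automorphism W_r(χ̂) maps m_ψ to m_φ. -/
open scoped TensorProduct
open Coalgebra

/-- The right winding endomorphism `h ↦ Σ h₍₁₎ f(h₍₂₎)` associated to a linear
functional f on a coalgebra H. -/
noncomputable def windR (k : Type) {H : Type} [CommSemiring k] [AddCommMonoid H]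
    [Module k H] [Coalgebra k H] (f : H →ₗ[k] k) : H →ₗ[k] H :=
  (TensorProduct.rid k H).toLinearMap ∘ₗ
    (TensorProduct.map LinearMap.id f) ∘ₗ Coalgebra.comul

lemma windR_repr {k H : Type} [CommSemiring k] [AddCommMonoid H] [Module k H]
    [Coalgebra k H] {ι : Type*} (f : H →ₗ[k] k) (a : H) (r : Coalgebra.Repr k a ι) :
    windR k f a = ∑ i ∈ r.index, f (r.right i) • r.left i := by
  simp [windR, ← r.eq, map_sum]

lemma wind_inv {k C : Type} [Field k] [CommRing C] [HopfAlgebra k C] (χ : C →ₐ[k] k) (c : C) :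
    windR k χ.toLinearMap
      (windR k (χ.toLinearMap ∘ₗ HopfAlgebra.antipode (R := k)) c) = c := by
  classical
  set r := ℛ k c with hr
  set a₁ : (i : C × C) → Coalgebra.Repr k (r.left i) (C × C) := fun i => ℛ k (r.left i) with ha₁
  set a₂ : (i : C × C) → Coalgebra.Repr k (r.right i) (C × C) := fun i => ℛ k (r.right i) with ha₂
  have h3 := Coalgebra.sum_tmul_tmul_eq r a₁ a₂
  set g : C ⊗[k] C →ₗ[k] k :=
    LinearMap.mul' k k ∘ₗ TensorProduct.map χ.toLinearMap
      (χ.toLinearMap ∘ₗ HopfAlgebra.antipode (R := k)) with hg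
  set F : C ⊗[k] (C ⊗[k] C) →ₗ[k] C :=
    (TensorProduct.rid k C).toLinearMap ∘ₗ TensorProduct.map LinearMap.id g with hFdef
  have hF := congrArg F h3
  simp only [map_sum, hFdef, hg, LinearMap.coe_comp, Function.comp_apply,
    TensorProduct.map_tmul, LinearMap.id_coe, id_eq, LinearMap.mul'_apply,
    LinearEquiv.coe_coe, TensorProduct.rid_tmul, AlgHom.toLinearMap_apply] at hF
  have lhs_eq : windR k χ.toLinearMap
      (windR k (χ.toLinearMap ∘ₗ HopfAlgebra.antipode (R := k)) c)
      = ∑ i ∈ r.index, ∑ j ∈ (a₁ i).index,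
          (χ ((a₁ i).right j) * χ (HopfAlgebra.antipode (R := k) (r.right i))) •
            (a₁ i).left j := by
    rw [windR_repr _ _ r, map_sum]
    refine Finset.sum_congr rfl fun i _ => ?_
    rw [map_smul, windR_repr _ _ (a₁ i), Finset.smul_sum]
    refine Finset.sum_congr rfl fun j _ => ?_
    simp [smul_smul, mul_comm]
  rw [lhs_eq, hF]
  have rhs_eq : ∀ i ∈ r.index, ∑ j ∈ (a₂ i).index,
      (χ ((a₂ i).left j) * χ (HopfAlgebra.antipode (R := k) ((a₂ i).right j))) • r.left i
      = Coalgebra.counit (R := k) (r.right i) • r.left i := by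
    intro i _
    rw [← Finset.sum_smul]
    congr 1
    have : ∑ j ∈ (a₂ i).index,
        χ ((a₂ i).left j) * χ (HopfAlgebra.antipode (R := k) ((a₂ i).right j))
        = χ (∑ j ∈ (a₂ i).index,
            (a₂ i).left j * HopfAlgebra.antipode (R := k) ((a₂ i).right j)) := by
      rw [map_sum]; exact Finset.sum_congr rfl fun j _ => (map_mul χ _ _).symm
    rw [this, HopfAlgebra.sum_mul_antipode_eq_algebraMap_counit (a₂ i), AlgHom.commutes]
    simp
  rw [Finset.sum_congr rfl rhs_eq]
  have h := congrArg (TensorProduct.rid k C) (Coalgebra.sum_tmul_counit_eq r)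
  rw [map_sum] at h
  simp only [TensorProduct.rid_tmul, one_smul] at h
  exact h

/-- Let H be a Hopf algebra over an algebraically closed field k with
central Hopf subalgebra C (given by a central Hopf algebra map ι : C → H) such that
H is finitely generated over C.  Suppose φ, ψ, χ are characters of C with
ψ = φ ∗ χ (convolution) and the fiber of H at ker χ has a 1-dimensional module
(i.e. χ extends to a character of H; this says ker χ lies in the subgroup I).
Then there is a character χ̂ of H extending χ such that the right winding
automorphism W_r(χ̂) maps m_ψ = ker ψ onto m_φ = ker φ. -/
theorem stmt_14 (k C H : Type) [Field k] [IsAlgClosed k]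
    [Ring H] [HopfAlgebra k H] [CommRing C] [HopfAlgebra k C]
    (ι : C →ₐ[k] H)
    (hcentral : ∀ (c : C) (h : H), ι c * h = h * ι c)
    (hcomul : ∀ c : C, Coalgebra.comul (R := k) (ι c)
      = TensorProduct.map ι.toLinearMap ι.toLinearMap (Coalgebra.comul (R := k) c))
    (hcounit : ∀ c : C, Bialgebra.counitAlgHom k H (ι c) = Bialgebra.counitAlgHom k C c)
    (hfin : @Module.Finite C H _ _ (Module.compHom H ι.toRingHom))
    (φ ψ χ : C →ₐ[k] k)
    (hext : ∃ ρ : H →ₐ[k] k, ∀ c : C, ρ (ι c) = χ c)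
    (hconv : ∀ c : C, ψ c =
      LinearMap.mul' k k
        (TensorProduct.map φ.toLinearMap χ.toLinearMap (Coalgebra.comul (R := k) c))) :
    ∃ χhat : H →ₐ[k] k, (∀ c : C, χhat (ι c) = χ c) ∧
      (windR k χhat.toLinearMap) '' (⇑ι '' (RingHom.ker ψ : Set C)) =
        ⇑ι '' (RingHom.ker φ : Set C) := by
  obtain ⟨ρ, hρ⟩ := hext
  have hψφ : ∀ c : C, φ (windR k χ.toLinearMap c) = ψ c := by
    intro c
    set r := ℛ k c with hr
    rw [windR_repr _ _ r, hconv c, ← r.eq]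
    simp [map_sum, mul_comm]
  have htrans : ∀ c : C, windR k ρ.toLinearMap (ι c) = ι (windR k χ.toLinearMap c) := by
    intro c
    set r := ℛ k c with hr
    have h1 : Coalgebra.comul (R := k) (ι c)
        = ∑ i ∈ r.index, ι (r.left i) ⊗ₜ[k] ι (r.right i) := by
      rw [hcomul c, ← r.eq, map_sum]; simp
    rw [windR_repr _ _ r]
    simp only [windR, LinearMap.coe_comp, Function.comp_apply, LinearEquiv.coe_coe, h1,
      map_sum, TensorProduct.map_tmul, LinearMap.id_coe, id_eq,
      TensorProduct.rid_tmul, AlgHom.toLinearMap_apply, hρ, map_smul]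
  refine ⟨ρ, hρ, Set.Subset.antisymm ?_ ?_⟩
  · rintro _ ⟨_, ⟨c, hc, rfl⟩, rfl⟩
    refine ⟨windR k χ.toLinearMap c, ?_, (htrans c).symm⟩
    show _ ∈ RingHom.ker (φ : C →+* k)
    rw [RingHom.mem_ker]
    show φ _ = 0
    rw [hψφ]
    exact hc
  · rintro _ ⟨d, hd, rfl⟩
    refine ⟨ι (windR k (χ.toLinearMap ∘ₗ HopfAlgebra.antipode (R := k)) d),
      ⟨windR k (χ.toLinearMap ∘ₗ HopfAlgebra.antipode (R := k)) d, ?_, rfl⟩, ?_⟩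
    · show _ ∈ RingHom.ker (ψ : C →+* k)
      rw [RingHom.mem_ker]
      show ψ _ = 0
      rw [← hψφ, wind_inv]
      exact hd
    · rw [htrans, wind_inv]
end
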